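/- arXiv:2405.16327 — 2 statements merged into one kernel-verified Lean document; each statement's English description precedes it below -/
import Mathlib

section
/- Fix n ≥ 1 and let θ : ℝ → (0,π) be differentiable with sin((n+1)θ(k)) + k·sin(n·θ(k)) = 0 and sin(n·θ(k)) ≠ 0 for all k in an interval. Then θ is monotonically non-decreasing on that interval, i.e., θ'(k) ≥ 0. -/
lemma abs_sin_nat_mul_le' (m : ℕ) (x : ℝ) (hs : 0 ≤ Real.sin x) :
    |Real.sin (m * x)| ≤ m * Real.sin x := by
  induction m with
  | zero => simp
  | succ k ih =>
    have h : Real.sin ((k + 1 : ℕ) * x)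
        = Real.sin (k * x) * Real.cos x + Real.cos (k * x) * Real.sin x := by
      push_cast
      rw [show ((k : ℝ) + 1) * x = k * x + x by ring, Real.sin_add]
    have hA : |Real.sin (k * x)| * |Real.cos x| ≤ k * Real.sin x :=
      le_trans (mul_le_of_le_one_right (abs_nonneg _) (Real.abs_cos_le_one _)) ih
    have hB : |Real.cos (k * x)| * Real.sin x ≤ 1 * Real.sin x :=
      mul_le_mul_of_nonneg_right (Real.abs_cos_le_one _) hs
    calc |Real.sin ((k + 1 : ℕ) * x)|
        ≤ |Real.sin (k * x) * Real.cos x| + |Real.cos (k * x) * Real.sin x| := by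
          rw [h]; exact abs_add_le _ _
      _ = |Real.sin (k * x)| * |Real.cos x| + |Real.cos (k * x)| * Real.sin x := by
          rw [abs_mul, abs_mul, abs_of_nonneg hs]
      _ ≤ (k + 1 : ℕ) * Real.sin x := by push_cast; linarith

lemma abs_sin_nat_mul_lt (m : ℕ) (hm : 2 ≤ m) (x : ℝ) (hx : 0 < x) (hx' : x < Real.pi) :
    |Real.sin (m * x)| < m * Real.sin x := by
  have hs : 0 < Real.sin x := Real.sin_pos_of_pos_of_lt_pi hx hx'
  have hcos : |Real.cos x| < 1 := by
    nlinarith [Real.sin_sq_add_cos_sq x, abs_nonneg (Real.cos x), sq_abs (Real.cos x)]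
  obtain ⟨k, rfl⟩ : ∃ k, m = k + 1 := ⟨m - 1, by omega⟩
  have hk : 1 ≤ k := by omega
  have hk' : (1 : ℝ) ≤ k := by exact_mod_cast hk
  have h : Real.sin ((k + 1 : ℕ) * x)
      = Real.sin (k * x) * Real.cos x + Real.cos (k * x) * Real.sin x := by
    push_cast
    rw [show ((k : ℝ) + 1) * x = k * x + x by ring, Real.sin_add]
  have ih := abs_sin_nat_mul_le' k x hs.le
  have hb : |Real.sin ((k+1 : ℕ) * x)|
      ≤ |Real.sin (k * x)| * |Real.cos x| + |Real.cos (k * x)| * Real.sin x := by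
    rw [h]
    calc _ ≤ |Real.sin (k * x) * Real.cos x| + |Real.cos (k * x) * Real.sin x| := abs_add_le _ _
    _ = _ := by rw [abs_mul, abs_mul, abs_of_nonneg hs.le]
  have hB : |Real.cos (k * x)| * Real.sin x ≤ 1 * Real.sin x :=
    mul_le_mul_of_nonneg_right (Real.abs_cos_le_one _) hs.le
  push_cast at hb
  rcases eq_or_ne (Real.sin (k * x)) 0 with h0 | h0
  · rw [h0, abs_zero, zero_mul] at hb
    push_cast
    nlinarith [mul_pos (lt_of_lt_of_le zero_lt_one hk') hs]
  · have h1 : |Real.sin (k * x)| * |Real.cos x| < k * Real.sin x := by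
      have h2 : |Real.sin (k * x)| * |Real.cos x| < |Real.sin (k * x)| * 1 :=
        mul_lt_mul_of_pos_left hcos (abs_pos.mpr h0)
      nlinarith
    push_cast
    linarith

theorem theta_monotone (n : ℕ) (hn : 1 ≤ n) (a b : ℝ) (θ : ℝ → ℝ)
    (hrange : ∀ k ∈ Set.Ioo a b, θ k ∈ Set.Ioo 0 Real.pi)
    (hdiff : Differentiable ℝ θ)
    (heq : ∀ k ∈ Set.Ioo a b, Real.sin ((n + 1) * θ k) + k * Real.sin (n * θ k) = 0)
    (hsin : ∀ k ∈ Set.Ioo a b, Real.sin (n * θ k) ≠ 0) :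
    MonotoneOn θ (Set.Ioo a b) ∧ ∀ k ∈ Set.Ioo a b, 0 ≤ deriv θ k := by
  have key : ∀ k ∈ Set.Ioo a b, 0 ≤ deriv θ k := by
    intro k hk
    set x := θ k with hx
    set t := deriv θ k with ht
    have hθ : HasDerivAt θ t k := (hdiff k).hasDerivAt
    have h1 : HasDerivAt (fun k => Real.sin ((n + 1) * θ k))
        (Real.cos ((n + 1) * x) * (((n : ℝ) + 1) * t)) k := (hθ.const_mul ((n : ℝ) + 1)).sin
    have h2 : HasDerivAt (fun k => k * Real.sin (n * θ k))
        (1 * Real.sin (n * x) + k * (Real.cos (n * x) * ((n : ℝ) * t))) k :=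
      (hasDerivAt_id k).mul ((hθ.const_mul (n : ℝ)).sin)
    have hG : HasDerivAt (fun k => Real.sin ((n + 1) * θ k) + k * Real.sin (n * θ k))
        (Real.cos ((n + 1) * x) * (((n : ℝ) + 1) * t)
          + (1 * Real.sin (n * x) + k * (Real.cos (n * x) * ((n : ℝ) * t)))) k := h1.add h2
    have hzero : HasDerivAt (fun k => Real.sin ((n + 1) * θ k) + k * Real.sin (n * θ k)) 0 k := by
      have hmem : Set.Ioo a b ∈ nhds k := Ioo_mem_nhds hk.1 hk.2
      have hev : (fun k => Real.sin ((n + 1) * θ k) + k * Real.sin (n * θ k)) =ᶠ[nhds k]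
          (fun _ => (0 : ℝ)) := Filter.eventually_of_mem hmem heq
      exact (hasDerivAt_const k (0 : ℝ)).congr_of_eventuallyEq hev
    have heq0 : Real.cos ((n + 1) * x) * (((n : ℝ) + 1) * t)
        + (1 * Real.sin (n * x) + k * (Real.cos (n * x) * ((n : ℝ) * t))) = 0 :=
      hG.unique hzero
    have hx0 := hrange k hk
    have hs : 0 < Real.sin x := Real.sin_pos_of_pos_of_lt_pi hx0.1 hx0.2
    have hstrict : |Real.sin ((2 * n + 1 : ℕ) * x)| < (2 * n + 1 : ℕ) * Real.sin x :=
      abs_sin_nat_mul_lt (2 * n + 1) (by omega) x hx0.1 hx0.2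
    have hsinlt : Real.sin (((2 * n + 1 : ℕ) : ℝ) * x) < ((2 * n + 1 : ℕ) : ℝ) * Real.sin x :=
      lt_of_le_of_lt (le_abs_self _) hstrict
    have hadd : Real.sin (((2 * n + 1 : ℕ) : ℝ) * x)
        = Real.sin (((n : ℝ) + 1) * x) * Real.cos ((n : ℝ) * x)
          + Real.cos (((n : ℝ) + 1) * x) * Real.sin ((n : ℝ) * x) := by
      rw [show ((2 * n + 1 : ℕ) : ℝ) * x = ((n : ℝ) + 1) * x + (n : ℝ) * x by push_cast; ring,
        Real.sin_add]
    have hsub : Real.sin x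
        = Real.sin (((n : ℝ) + 1) * x) * Real.cos ((n : ℝ) * x)
          - Real.cos (((n : ℝ) + 1) * x) * Real.sin ((n : ℝ) * x) := by
      have h := Real.sin_sub (((n : ℝ) + 1) * x) ((n : ℝ) * x)
      rw [show ((n : ℝ) + 1) * x - (n : ℝ) * x = x by ring] at h
      exact h
    rw [hadd, hsub] at hsinlt
    push_cast at hsinlt
    have hE : ((n : ℝ) + 1) * Real.cos ((n + 1) * x) * Real.sin (n * x)
        - (n : ℝ) * Real.cos (n * x) * Real.sin ((n + 1) * x) < 0 := by nlinarith [hsinlt]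
    have hk2 : Real.sin ((n + 1) * x) + k * Real.sin (n * x) = 0 := heq k hk
    have hS2 : Real.sin (n * x) ≠ 0 := hsin k hk
    have hkS : k * Real.sin (n * x) = - Real.sin ((n + 1) * x) := by linarith
    have htE : t * (((n : ℝ) + 1) * Real.cos ((n + 1) * x) * Real.sin (n * x)
        - (n : ℝ) * Real.cos (n * x) * Real.sin ((n + 1) * x)) = - Real.sin (n * x) ^ 2 := by
      linear_combination Real.sin ((n : ℝ) * x) * heq0
        - (n : ℝ) * Real.cos ((n : ℝ) * x) * t * hkS
    have hsq : 0 < Real.sin (n * x) ^ 2 := by positivity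
    by_contra hneg
    push_neg at hneg
    have := mul_pos_of_neg_of_neg hneg hE
    linarith
  refine ⟨?_, key⟩
  exact monotoneOn_of_deriv_nonneg (convex_Ioo a b) (hdiff.continuous.continuousOn)
    (fun x hx => (hdiff x).differentiableWithinAt)
    (fun x hx => key x (by rwa [interior_Ioo] at hx))
end

section
/- The characteristic polynomial of the state matrix modified by a virtual-resistance current feedback with gain k_I (changing the (2n+1,2n+1) entry from −R/L to −(R+k_I)/L) equals (λ + (R+k_I)/L)·P_n(g(λ)) − (k_I/(L²C))·P_{n−1}(g(λ)). -/
/-- State matrix of a cascade of `n` π-sections (size `2n+1`), eq. (1) of the paper. -/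
noncomputable def lineMatrix (R L G C : ℝ) (n : ℕ) : Matrix (Fin (2 * n + 1)) (Fin (2 * n + 1)) ℂ :=
  Matrix.of fun i j =>
    if (i : ℕ) = (j : ℕ) then
      (if (i : ℕ) % 2 = 0 then -((R : ℂ) / L) else -((G : ℂ) / C))
    else if (j : ℕ) = (i : ℕ) + 1 then
      (if (i : ℕ) % 2 = 0 then -(1 / (L : ℂ)) else -(1 / (C : ℂ)))
    else if (i : ℕ) = (j : ℕ) + 1 then
      (if (j : ℕ) % 2 = 0 then 1 / (C : ℂ) else 1 / (L : ℂ))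
    else 0

/-- `P_n(μ) = (1/(LC))^n U_n((1/2)LCμ + 1)`. -/
noncomputable def Pseq (L C : ℝ) (n : ℕ) (μ : ℂ) : ℂ :=
  (1 / ((L : ℂ) * C)) ^ n *
    (Polynomial.Chebyshev.U ℂ (n : ℤ)).eval ((1 / 2 : ℂ) * L * C * μ + 1)

/-- `g(λ) = (λ + R/L)(λ + G/C)`. -/
noncomputable def gfun (R L G C : ℝ) (lam : ℂ) : ℂ := (lam + R / L) * (lam + G / C)

/-- Closed-loop state matrix under a virtual-resistance current feedback with gain `kI`:
the last diagonal entry becomes `−(R+kI)/L`. -/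
noncomputable def closedLoopI (R L G C kI : ℝ) (n : ℕ) :
    Matrix (Fin (2 * n + 1)) (Fin (2 * n + 1)) ℂ :=
  Matrix.of fun i j =>
    if (i : ℕ) = 2 * n ∧ (j : ℕ) = 2 * n then -(((R : ℂ) + kI) / L)
    else lineMatrix R L G C n i j


open Matrix Polynomial

/-- General tridiagonal matrix family built from three scalar sequences. -/
noncomputable def triMat (dg sp sb : ℕ → ℂ) (m : ℕ) : Matrix (Fin m) (Fin m) ℂ :=
  Matrix.of fun i j =>
    if (i : ℕ) = (j : ℕ) then dg i
    else if (j : ℕ) = (i : ℕ) + 1 then sp i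
    else if (i : ℕ) = (j : ℕ) + 1 then sb j
    else 0

noncomputable def Dseq (dg sp sb : ℕ → ℂ) : ℕ → ℂ
  | 0 => 1
  | 1 => dg 0
  | (m + 2) => dg (m + 1) * Dseq dg sp sb (m + 1) - sp m * sb m * Dseq dg sp sb m

lemma triMat_cast {dg sp sb : ℕ → ℂ} (m : ℕ) :
    (triMat dg sp sb (m + 2)).submatrix Fin.castSucc Fin.castSucc
      = triMat dg sp sb (m + 1) := by
  ext i j
  simp [triMat, Matrix.submatrix_apply]

lemma triMat_det_rec (dg sp sb : ℕ → ℂ) (m : ℕ) :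
    (triMat dg sp sb (m + 2)).det
      = dg (m + 1) * (triMat dg sp sb (m + 1)).det
        - sp m * sb m * (triMat dg sp sb m).det := by
  have hrow := Matrix.det_succ_row (triMat dg sp sb (m + 2)) (Fin.last (m + 1))
  rw [hrow, Fin.sum_univ_castSucc, Fin.sum_univ_castSucc]
  have hzero : ∀ j : Fin m,
      (triMat dg sp sb (m + 2)) (Fin.last (m + 1)) (Fin.castSucc (Fin.castSucc j)) = 0 := by
    intro j
    have hj : (j : ℕ) < m := j.isLt
    simp only [triMat, Matrix.of_apply, Fin.coe_castSucc, Fin.val_last]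
    rw [if_neg (by omega), if_neg (by omega), if_neg (by omega)]
  rw [Finset.sum_eq_zero fun j _ => by rw [hzero j, mul_zero, zero_mul], zero_add]
  -- the diagonal term
  have hdiag : (triMat dg sp sb (m + 2)) (Fin.last (m + 1)) (Fin.last (m + 1)) = dg (m + 1) := by
    simp [triMat]
  have hsub : (triMat dg sp sb (m + 2)) (Fin.last (m + 1)) (Fin.castSucc (Fin.last m)) = sb m := by
    simp only [triMat, Matrix.of_apply, Fin.coe_castSucc, Fin.val_last]
    rw [if_neg (by omega), if_neg (by omega)]; simp
  have hsucclast : (Fin.last (m + 1)).succAbove = Fin.castSucc := Fin.succAbove_last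
  -- the inner (m+1)×(m+1) matrix B coming from the subdiagonal term
  set B := (triMat dg sp sb (m + 2)).submatrix Fin.castSucc
      (Fin.castSucc (Fin.last m)).succAbove with hB
  have hdetB : B.det = sp m * (triMat dg sp sb m).det := by
    have hcol := Matrix.det_succ_column B (Fin.last m)
    rw [hcol, Fin.sum_univ_castSucc]
    have hcolval : (Fin.castSucc (Fin.last m)).succAbove (Fin.last m) = Fin.last (m + 1) := by
      ext
      simp [Fin.succAbove, Fin.lt_def]
    have hBzero : ∀ i : Fin m, B (Fin.castSucc i) (Fin.last m) = 0 := by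
      intro i
      have hi : (i : ℕ) < m := i.isLt
      simp only [hB, Matrix.submatrix_apply, hcolval]
      simp only [triMat, Matrix.of_apply, Fin.coe_castSucc, Fin.val_last]
      rw [if_neg (by omega), if_neg (by omega), if_neg (by omega)]
    rw [Finset.sum_eq_zero fun i _ => by rw [hBzero i, mul_zero, zero_mul], zero_add]
    have hBlast : B (Fin.last m) (Fin.last m) = sp m := by
      simp only [hB, Matrix.submatrix_apply, hcolval]
      simp only [triMat, Matrix.of_apply, Fin.coe_castSucc, Fin.val_last]
      rw [if_neg (by omega)]; simp
    have hBsub : B.submatrix (Fin.last m).succAbove (Fin.last m).succAbove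
        = triMat dg sp sb m := by
      rw [Fin.succAbove_last]
      ext i j
      have hj : (j : ℕ) < m := j.isLt
      have hsA : (Fin.castSucc (Fin.last m)).succAbove (Fin.castSucc j)
          = Fin.castSucc (Fin.castSucc j) := by
        have : Fin.castSucc (Fin.castSucc j) < Fin.castSucc (Fin.last m) := by
          simp only [Fin.lt_def, Fin.coe_castSucc, Fin.val_last]; omega
        ext
        simp [Fin.succAbove, this]
      simp only [hB, Matrix.submatrix_apply, hsA]
      simp [triMat]
    rw [hBlast, hBsub]
    have : ((-1 : ℂ)) ^ ((Fin.last m : ℕ) + (Fin.last m : ℕ)) = 1 := by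
      simp [Fin.val_last, ← two_mul, pow_mul]
    rw [this, one_mul]
  rw [hdiag, hsub, hsucclast, triMat_cast, hdetB]
  have h1 : ((-1 : ℂ)) ^ ((Fin.last (m + 1) : ℕ) + (Fin.last (m + 1) : ℕ)) = 1 := by
    simp [Fin.val_last, ← two_mul, pow_mul]
  have h2 : ((-1 : ℂ)) ^ ((Fin.last (m + 1) : ℕ) + (Fin.castSucc (Fin.last m) : ℕ)) = -1 := by
    simp only [Fin.val_last, Fin.coe_castSucc]
    have : m + 1 + m = 2 * m + 1 := by omega
    rw [this, pow_succ, pow_mul]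
    simp
  rw [h1, h2]
  ring


lemma triMat_det (dg sp sb : ℕ → ℂ) : ∀ m, (triMat dg sp sb m).det = Dseq dg sp sb m := by
  intro m
  induction m using Nat.strong_induction_on with
  | _ m ih =>
    match m with
    | 0 => simp [triMat, Dseq]
    | 1 => rw [Matrix.det_fin_one]; simp [triMat, Dseq]
    | (m + 2) =>
        rw [triMat_det_rec, ih (m + 1) (by omega), ih m (by omega)]
        rfl

lemma Dseq_congr (dg1 dg2 sp sb : ℕ → ℂ) :
    ∀ m, (∀ i, i < m → dg1 i = dg2 i) → Dseq dg1 sp sb m = Dseq dg2 sp sb m := by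
  intro m
  induction m using Nat.strong_induction_on with
  | _ m ih =>
    match m with
    | 0 => intro _; rfl
    | 1 => intro h; simpa [Dseq] using h 0 (by omega)
    | (m + 2) =>
        intro h
        show dg1 (m+1) * Dseq dg1 sp sb (m+1) - sp m * sb m * Dseq dg1 sp sb m
          = dg2 (m+1) * Dseq dg2 sp sb (m+1) - sp m * sb m * Dseq dg2 sp sb m
        rw [h (m+1) (by omega), ih (m+1) (by omega) (fun i hi => h i (by omega)),
          ih m (by omega) (fun i hi => h i (by omega))]

lemma charpoly_eval_det {m : ℕ} (M : Matrix (Fin m) (Fin m) ℂ) (lam : ℂ) :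
    M.charpoly.eval lam
      = (Matrix.of fun i j => (if i = j then lam else 0) - M i j).det := by
  rw [Matrix.charpoly, ← Polynomial.coe_evalRingHom, RingHom.map_det]
  congr 1
  ext i j
  by_cases h : i = j
  · subst h
    simp [Matrix.charmatrix_apply_eq]
  · simp [Matrix.charmatrix_apply_ne _ _ _ h, h]

lemma Pseq_zero (L C : ℝ) (μ : ℂ) : Pseq L C 0 μ = 1 := by
  simp [Pseq, Polynomial.Chebyshev.U_zero]

lemma Pseq_one (L C : ℝ) (hL : (L:ℂ) ≠ 0) (hC : (C:ℂ) ≠ 0) (μ : ℂ) :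
    Pseq L C 1 μ = μ + 2 * (1 / ((L:ℂ) * C)) := by
  simp only [Pseq, Nat.cast_one, Polynomial.Chebyshev.U_one, pow_one]
  rw [Polynomial.eval_mul, Polynomial.eval_X]
  simp only [Polynomial.eval_ofNat]
  field_simp

lemma Pseq_rec (L C : ℝ) (hL : (L:ℂ) ≠ 0) (hC : (C:ℂ) ≠ 0) (m : ℕ) (μ : ℂ) :
    Pseq L C (m + 2) μ
      = (μ + 2 * (1 / ((L:ℂ) * C))) * Pseq L C (m + 1) μ
        - (1 / ((L:ℂ) * C)) ^ 2 * Pseq L C m μ := by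
  have h := Polynomial.Chebyshev.U_add_two ℂ (m : ℤ)
  simp only [Pseq]
  have hcast2 : ((m + 2 : ℕ) : ℤ) = (m : ℤ) + 2 := by push_cast; ring
  have hcast1 : ((m + 1 : ℕ) : ℤ) = (m : ℤ) + 1 := by push_cast; ring
  rw [hcast2, hcast1, h]
  rw [Polynomial.eval_sub, Polynomial.eval_mul, Polynomial.eval_mul, Polynomial.eval_X]
  simp only [Polynomial.eval_ofNat]
  have hx : (1 / ((L:ℂ) * C)) * ((L:ℂ) * C) = 1 := one_div_mul_cancel (mul_ne_zero hL hC)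
  linear_combination ((1 / ((L:ℂ) * C)) ^ (m + 1) * μ *
    (Polynomial.Chebyshev.U ℂ ((m:ℤ) + 1)).eval ((1 / 2 : ℂ) * L * C * μ + 1)) * hx

lemma Dseq_rec (dg sp sb : ℕ → ℂ) (k : ℕ) :
    Dseq dg sp sb (k + 2)
      = dg (k + 1) * Dseq dg sp sb (k + 1) - sp k * sb k * Dseq dg sp sb k := rfl

noncomputable def dgO (R L G C : ℝ) (lam : ℂ) (i : ℕ) : ℂ :=
  lam + (if i % 2 = 0 then (R : ℂ) / L else (G : ℂ) / C)

noncomputable def spO (L C : ℝ) (i : ℕ) : ℂ :=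
  if i % 2 = 0 then 1 / (L : ℂ) else 1 / (C : ℂ)

noncomputable def sbO (L C : ℝ) (j : ℕ) : ℂ :=
  if j % 2 = 0 then -(1 / (C : ℂ)) else -(1 / (L : ℂ))

noncomputable def dgK (R L G C kI : ℝ) (lam : ℂ) (N i : ℕ) : ℂ :=
  if i = N then lam + ((R : ℂ) + kI) / L else dgO R L G C lam i

lemma spsb (L C : ℝ) (i : ℕ) :
    spO L C i * sbO L C i = -(1 / ((L : ℂ) * C)) := by
  unfold spO sbO
  split_ifs <;> field_simp <;> ring

lemma Dopen (R L G C : ℝ) (lam : ℂ) (hL : (L : ℂ) ≠ 0) (hC : (C : ℂ) ≠ 0) (m : ℕ) :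
    Dseq (dgO R L G C lam) (spO L C) (sbO L C) (2 * m + 1)
        = (lam + (R : ℂ) / L) * Pseq L C m (gfun R L G C lam) ∧
      Dseq (dgO R L G C lam) (spO L C) (sbO L C) (2 * m + 2)
        = Pseq L C (m + 1) (gfun R L G C lam)
          - (1 / ((L : ℂ) * C)) * Pseq L C m (gfun R L G C lam) := by
  set a : ℂ := lam + (R : ℂ) / L with ha
  set b : ℂ := lam + (G : ℂ) / C with hb
  set e : ℂ := 1 / ((L : ℂ) * C) with he
  have hg : gfun R L G C lam = a * b := rfl
  induction m with
  | zero =>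
      constructor
      · show dgO R L G C lam 0 = a * Pseq L C 0 (gfun R L G C lam)
        rw [Pseq_zero]
        simp [dgO, ha]
      · have h2 : 2 * 0 + 2 = 0 + 2 := by ring
        rw [h2, Dseq_rec, Pseq_one L C hL hC, Pseq_zero, spsb, hg]
        show dgO R L G C lam 1 * dgO R L G C lam 0 - _ * 1 = _
        simp only [dgO]
        norm_num
        ring
  | succ m ih =>
      obtain ⟨ih1, ih2⟩ := ih
      have left : Dseq (dgO R L G C lam) (spO L C) (sbO L C) (2 * (m + 1) + 1)
          = a * Pseq L C (m + 1) (gfun R L G C lam) := by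
        have h3 : 2 * (m + 1) + 1 = (2 * m + 1) + 2 := by ring
        rw [h3, Dseq_rec, spsb]
        have heven : ((2 * m + 1) + 1) % 2 = 0 := by omega
        have hdg : dgO R L G C lam ((2 * m + 1) + 1) = a := by simp [dgO, heven, ha]
        have h5 : (2 * m + 1) + 1 = 2 * m + 2 := by ring
        rw [hdg, h5, ih2, ih1]
        ring
      refine ⟨left, ?_⟩
      have h3 : 2 * (m + 1) + 2 = (2 * m + 2) + 2 := by ring
      rw [h3, Dseq_rec, spsb]
      have hdg : dgO R L G C lam ((2 * m + 2) + 1) = b := by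
        have h1 : ((2 * m + 2) + 1) % 2 = 1 := by omega
        simp [dgO, h1, hb]
      have h7 : (2 * m + 2) + 1 = 2 * (m + 1) + 1 := by ring
      rw [hdg, h7, left, ih2, Pseq_rec L C hL hC m, hg]
      ring

theorem closedLoop_charpoly_current (R L G C kI : ℝ) (hR : 0 < R) (hL : 0 < L)
    (hG : 0 < G) (hC : 0 < C) (hkI : 0 < kI) (n : ℕ) (hn : 1 ≤ n) (lam : ℂ) :
    (closedLoopI R L G C kI n).charpoly.eval lam =
      (lam + ((R : ℂ) + kI) / L) * Pseq L C n (gfun R L G C lam)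
        - ((kI : ℂ) / ((L : ℂ) ^ 2 * C)) * Pseq L C (n - 1) (gfun R L G C lam) := by
  obtain ⟨p, rfl⟩ : ∃ p, n = p + 1 := ⟨n - 1, by omega⟩
  have hLne : (L : ℂ) ≠ 0 := Complex.ofReal_ne_zero.mpr (ne_of_gt hL)
  have hCne : (C : ℂ) ≠ 0 := Complex.ofReal_ne_zero.mpr (ne_of_gt hC)
  rw [charpoly_eval_det]
  have hmat : (Matrix.of fun i j : Fin (2 * (p + 1) + 1) =>
      (if i = j then lam else 0) - closedLoopI R L G C kI (p + 1) i j)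
      = triMat (dgK R L G C kI lam (2 * (p + 1))) (spO L C) (sbO L C) (2 * (p + 1) + 1) := by
    ext i j
    simp only [Matrix.of_apply, closedLoopI, lineMatrix, triMat, dgK, dgO, spO, sbO,
      Fin.ext_iff]
    split_ifs <;> first | omega | ring
  rw [hmat, triMat_det]
  have hsz : 2 * (p + 1) + 1 = (2 * p + 1) + 2 := by ring
  rw [hsz, Dseq_rec, spsb]
  have hdgK : dgK R L G C kI lam (2 * (p + 1)) ((2 * p + 1) + 1)
      = lam + ((R : ℂ) + kI) / L := by
    simp only [dgK]
    rw [if_pos (by omega)]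
  have hcongr : ∀ m, m ≤ 2 * p + 2 →
      Dseq (dgK R L G C kI lam (2 * (p + 1))) (spO L C) (sbO L C) m
        = Dseq (dgO R L G C lam) (spO L C) (sbO L C) m := by
    intro m hm
    refine Dseq_congr _ _ _ _ m fun i hi => ?_
    simp only [dgK]
    rw [if_neg (by omega)]
  have h21 : (2 * p + 1) + 1 = 2 * p + 2 := by ring
  rw [hdgK, h21, hcongr (2 * p + 2) le_rfl, hcongr (2 * p + 1) (by omega),
    (Dopen R L G C lam hLne hCne p).1, (Dopen R L G C lam hLne hCne p).2]
  have hsub : p + 1 - 1 = p := by omega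
  rw [hsub]
  have hkey : (lam + ((R : ℂ) + kI) / L) * (1 / ((L : ℂ) * C))
      - (1 / ((L : ℂ) * C)) * (lam + (R : ℂ) / L) = (kI : ℂ) / ((L : ℂ) ^ 2 * C) := by
    field_simp
    ring
  set P1 := Pseq L C (p + 1) (gfun R L G C lam)
  set P0 := Pseq L C p (gfun R L G C lam)
  calc (lam + ((R : ℂ) + kI) / L) * (P1 - 1 / ((L : ℂ) * C) * P0)
        - -(1 / ((L : ℂ) * C)) * ((lam + (R : ℂ) / L) * P0)
      = (lam + ((R : ℂ) + kI) / L) * P1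
        - ((lam + ((R : ℂ) + kI) / L) * (1 / ((L : ℂ) * C))
            - (1 / ((L : ℂ) * C)) * (lam + (R : ℂ) / L)) * P0 := by ring
    _ = _ := by rw [hkey]
end
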